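/- Assume (H1), (H3), (H5), let μ > 0 satisfy γ₁ − μ > L, and let a : ℝ → ℝⁿ be Borel measurable. Then for every v₀ ∈ ℝᵐ the integral equation û_t = ∫_{−∞}^t e^{A(t−r)} U(û_r + a(r), v₀) dr, t ≤ 0, has a unique solution û in C⁻_μ(ℝⁿ), and its value at 0 satisfies |û₀| ≤ M_U/γ₁. (The map F̌⁰(v₀) := û₀ is the graph map of the invariant manifold of the limiting (ε = 0) system.) -/

import Mathlib

open scoped RealInnerProductSpace
open MeasureTheory

/-- `û` solves the limiting (`ε = 0`) integral equation on `(-∞, 0]`: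
`û_t = ∫_{-∞}^t e^{A(t-r)} U(û_r + a(r), v₀) dr`, as an element of `C⁻_μ(ℝⁿ)`
(continuity on `(-∞, 0]` and finiteness of `sup_{t ≤ 0} e^{μ t} ‖û_t‖`). -/
def IsLimitStarSolution (n m : ℕ) (μ : ℝ)
    (A : EuclideanSpace ℝ (Fin n) →L[ℝ] EuclideanSpace ℝ (Fin n))
    (U : EuclideanSpace ℝ (Fin n) × EuclideanSpace ℝ (Fin m) → EuclideanSpace ℝ (Fin n))
    (a : ℝ → EuclideanSpace ℝ (Fin n)) (v₀ : EuclideanSpace ℝ (Fin m))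
    (uh : ℝ → EuclideanSpace ℝ (Fin n)) : Prop :=
  ContinuousOn uh (Set.Iic 0) ∧
  (∃ K : ℝ, ∀ t : ℝ, t ≤ 0 → Real.exp (μ * t) * ‖uh t‖ ≤ K) ∧
  (∀ t : ℝ, t ≤ 0 →
    uh t = ∫ r in Set.Iic t, NormedSpace.exp ((t - r) • A) (U (uh r + a r, v₀)))

/-!
Solutions are the fixed points of the Lyapunov–Perron operator
`u ↦ (t ↦ ∫_{-∞}^t e^{(t-r)A} U(u_r + a_r, v₀) dr)`. By (H1), `‖e^{sA}‖ ≤ e^{-γ₁ s}` for `s ≥ 0`,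
so the operator maps bounded continuous functions into the ball of radius `M_U/γ₁` and is an
`L/γ₁`-contraction for the sup norm; its fixed point is the solution. For uniqueness in the larger
space `C⁻_μ`, the weighted norm `D = sup_{t ≤ 0} e^{μt} |u_t - v_t|` of the difference of two
solutions satisfies `D ≤ L/(γ₁ - μ) · D`, hence `D = 0`.
-/

open Set Filter Topology
open scoped BoundedContinuousFunction

theorem eqOn_zero_of_le_mul_of_upperBound {α : Type*} {s : Set α} {f : α → ℝ} {q : ℝ}
    (hf : ∀ x ∈ s, 0 ≤ f x) (hbdd : BddAbove (f '' s)) (hq : q < 1)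
    (h : ∀ D, (∀ x ∈ s, f x ≤ D) → ∀ x ∈ s, f x ≤ q * D) : EqOn f 0 s := by
  intro x hx
  have hS : ∀ y ∈ s, f y ≤ sSup (f '' s) := fun y hy => le_csSup hbdd (mem_image_of_mem f hy)
  have hSq : sSup (f '' s) ≤ q * sSup (f '' s) :=
    csSup_le ((nonempty_of_mem hx).image f) (forall_mem_image.2 (h _ hS))
  rw [Pi.zero_apply]
  nlinarith [hf x hx, hS x hx]

theorem continuous_of_norm_sub_le {F G H : Type*} [SeminormedAddCommGroup F]
    [SeminormedAddCommGroup G] [SeminormedAddCommGroup H] {U : F × G → H} {L : ℝ}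
    (hU : ∀ x₁ y₁ x₂ y₂, ‖U (x₁, y₁) - U (x₂, y₂)‖ ≤ L * (‖x₁ - x₂‖ + ‖y₁ - y₂‖)) :
    Continuous U := by
  refine (LipschitzWith.of_dist_le_mul (K := 2 * L.toNNReal) fun p q => ?_).continuous
  rw [dist_eq_norm, dist_eq_norm]
  calc ‖U p - U q‖ ≤ L * (‖p.1 - q.1‖ + ‖p.2 - q.2‖) := hU _ _ _ _
    _ ≤ L.toNNReal * (‖p - q‖ + ‖p - q‖) := by
        gcongr
        · exact Real.le_coe_toNNReal L
        · exact norm_fst_le (p - q)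
        · exact norm_snd_le (p - q)
    _ = ↑(2 * L.toNNReal) * ‖p - q‖ := by push_cast; ring

theorem aestronglyMeasurable_comp_of_continuousOn {F G : Type*} [TopologicalSpace F]
    [MeasurableSpace F] [BorelSpace F] [TopologicalSpace G] [MeasurableSpace G]
    [TopologicalSpace.PseudoMetrizableSpace G] [SecondCountableTopology G] [OpensMeasurableSpace G]
    {Φ : ℝ → F → G} (hΦ : Measurable (Function.uncurry Φ))
    {u : ℝ → F} {s : Set ℝ} (hs : MeasurableSet s) (hu : ContinuousOn u s) :
    AEStronglyMeasurable (fun r => Φ r (u r)) (volume.restrict s) :=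
  (hΦ.comp_aemeasurable (aemeasurable_id.prodMk (hu.aemeasurable hs))).aestronglyMeasurable

variable {E : Type*} [NormedAddCommGroup E] [InnerProductSpace ℝ E] {A : E →L[ℝ] E} {γ : ℝ}

noncomputable def lyapunovPerron (A : E →L[ℝ] E) (g : ℝ → E) (t : ℝ) : E :=
  ∫ r in Iic t, NormedSpace.exp ((t - r) • A) (g r)

theorem lyapunovPerron_sub {g h : ℝ → E} {t : ℝ}
    (hg : IntegrableOn (fun r => NormedSpace.exp ((t - r) • A) (g r)) (Iic t))
    (hh : IntegrableOn (fun r => NormedSpace.exp ((t - r) • A) (h r)) (Iic t)) :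
    lyapunovPerron A g t - lyapunovPerron A h t = lyapunovPerron A (fun r => g r - h r) t := by
  simp only [lyapunovPerron, map_sub, integral_sub hg hh]

variable [CompleteSpace E]

theorem norm_exp_smul_apply_le (hA : ∀ x, ⟪A x, x⟫ ≤ -γ * ‖x‖ ^ 2) {s : ℝ} (hs : 0 ≤ s)
    (x : E) : ‖NormedSpace.exp (s • A) x‖ ≤ Real.exp (-(γ * s)) * ‖x‖ := by
  set y : ℝ → E := fun u => NormedSpace.exp (u • A) x
  have hy : ∀ u, HasDerivAt y (A (y u)) u := fun u =>
    (ContinuousLinearMap.apply ℝ E x).hasFDerivAt.comp_hasDerivAt u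
      (hasDerivAt_exp_smul_const' A u)
  -- `u ↦ e^{2γu} ‖y u‖²` is antitone because `(‖y‖²)' = 2⟪y, A y⟫ ≤ -2γ ‖y‖²`
  have hanti : Antitone fun u => Real.exp (2 * γ * u) * ‖y u‖ ^ 2 := by
    refine antitone_of_hasDerivAt_nonpos
      (fun u => (((hasDerivAt_id u).const_mul (2 * γ)).exp).mul (hy u).norm_sq) fun u => ?_
    rw [Pi.zero_apply, id, real_inner_comm]
    nlinarith [mul_le_mul_of_nonneg_left (hA (y u)) (Real.exp_pos (2 * γ * u)).le]
  have key : (Real.exp (γ * s) * ‖y s‖) ^ 2 ≤ ‖x‖ ^ 2 :=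
    calc (Real.exp (γ * s) * ‖y s‖) ^ 2 = Real.exp (2 * γ * s) * ‖y s‖ ^ 2 := by
          rw [mul_pow, ← Real.exp_nat_mul]; ring_nf
      _ ≤ Real.exp (2 * γ * 0) * ‖y 0‖ ^ 2 := hanti hs
      _ = ‖x‖ ^ 2 := by simp [y]
  rw [Real.exp_neg, inv_mul_eq_div, le_div_iff₀ (Real.exp_pos _), mul_comm]
  exact (pow_le_pow_iff_left₀ (by positivity) (norm_nonneg x) two_ne_zero).1 key

theorem continuous_exp_smul (A : E →L[ℝ] E) : Continuous fun s : ℝ => NormedSpace.exp (s • A) :=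
  continuous_iff_continuousAt.2 fun s => (hasDerivAt_exp_smul_const' A s).continuousAt

theorem aestronglyMeasurable_exp_smul_apply (A : E →L[ℝ] E) (t : ℝ) {μ : Measure ℝ}
    {g : ℝ → E} (hg : AEStronglyMeasurable g μ) :
    AEStronglyMeasurable (fun r => NormedSpace.exp ((t - r) • A) (g r)) μ :=
  (continuous_fst.clm_apply continuous_snd).comp_aestronglyMeasurable₂
    ((continuous_exp_smul A).comp (continuous_const.sub continuous_id)).aestronglyMeasurable hg

theorem norm_exp_smul_apply_le_mul_exp (hA : ∀ x, ⟪A x, x⟫ ≤ -γ * ‖x‖ ^ 2) {μ C t r : ℝ}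
    (hr : r ≤ t) {y : E} (hy : ‖y‖ ≤ C * Real.exp (-(μ * r))) :
    ‖NormedSpace.exp ((t - r) • A) y‖ ≤ C * Real.exp (-(γ * t)) * Real.exp ((γ - μ) * r) :=
  calc ‖NormedSpace.exp ((t - r) • A) y‖ ≤ Real.exp (-(γ * (t - r))) * ‖y‖ :=
        norm_exp_smul_apply_le hA (sub_nonneg.2 hr) y
    _ ≤ Real.exp (-(γ * (t - r))) * (C * Real.exp (-(μ * r))) := by gcongr
    _ = C * Real.exp (-(γ * t)) * Real.exp ((γ - μ) * r) := by
        rw [mul_assoc, ← Real.exp_add, mul_left_comm, ← Real.exp_add]; ring_nf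

theorem integrableOn_exp_smul_apply (hγ : 0 < γ) (hA : ∀ x, ⟪A x, x⟫ ≤ -γ * ‖x‖ ^ 2)
    {g : ℝ → E} {C t : ℝ} (hg : AEStronglyMeasurable g (volume.restrict (Iic t)))
    (hb : ∀ r ≤ t, ‖g r‖ ≤ C) :
    IntegrableOn (fun r => NormedSpace.exp ((t - r) • A) (g r)) (Iic t) := by
  refine Integrable.mono' ((integrableOn_exp_mul_Iic hγ t).const_mul (C * Real.exp (-(γ * t))))
    (aestronglyMeasurable_exp_smul_apply A t hg) ?_
  filter_upwards [ae_restrict_mem measurableSet_Iic] with r hr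
  simpa using norm_exp_smul_apply_le_mul_exp (μ := 0) hA hr (by simpa using hb r hr)

theorem norm_lyapunovPerron_le (hA : ∀ x, ⟪A x, x⟫ ≤ -γ * ‖x‖ ^ 2) {μ : ℝ} (hμγ : μ < γ)
    {g : ℝ → E} {C t : ℝ} (hb : ∀ r ≤ t, ‖g r‖ ≤ C * Real.exp (-(μ * r))) :
    ‖lyapunovPerron A g t‖ ≤ C * Real.exp (-(μ * t)) / (γ - μ) := by
  have hγμ : 0 < γ - μ := sub_pos.2 hμγ
  have hbound : ∀ᵐ r ∂volume.restrict (Iic t), ‖NormedSpace.exp ((t - r) • A) (g r)‖ ≤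
      C * Real.exp (-(γ * t)) * Real.exp ((γ - μ) * r) := by
    filter_upwards [ae_restrict_mem measurableSet_Iic] with r hr
    exact norm_exp_smul_apply_le_mul_exp hA hr (hb r hr)
  refine (norm_integral_le_of_norm_le ((integrableOn_exp_mul_Iic hγμ t).const_mul _)
    hbound).trans_eq ?_
  rw [integral_const_mul, integral_exp_mul_Iic hγμ, mul_div_assoc', mul_assoc, ← Real.exp_add]
  ring_nf

theorem norm_lyapunovPerron_le_div (hγ : 0 < γ) (hA : ∀ x, ⟪A x, x⟫ ≤ -γ * ‖x‖ ^ 2)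
    {g : ℝ → E} {C t : ℝ} (hb : ∀ r ≤ t, ‖g r‖ ≤ C) : ‖lyapunovPerron A g t‖ ≤ C / γ := by
  simpa using norm_lyapunovPerron_le hA hγ (μ := 0) (C := C) (by simpa using hb)

theorem continuous_lyapunovPerron (hγ : 0 < γ) (hA : ∀ x, ⟪A x, x⟫ ≤ -γ * ‖x‖ ^ 2)
    {g : ℝ → E} {C : ℝ} (hg : AEStronglyMeasurable g) (hb : ∀ r, ‖g r‖ ≤ C) :
    Continuous (lyapunovPerron A g) := by
  have hC : 0 ≤ C := (norm_nonneg _).trans (hb 0)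
  set F : ℝ → ℝ → E := fun t r =>
    (Iic t).indicator (fun r => NormedSpace.exp ((t - r) • A) (g r)) r
  have hF : lyapunovPerron A g = fun t => ∫ r, F t r := funext fun t =>
    (integral_indicator measurableSet_Iic).symm
  refine continuous_iff_continuousAt.2 fun t₀ => hF ▸ continuousAt_of_dominated
    (bound := (Iic (t₀ + 1)).indicator fun r => C * Real.exp (γ * (1 - t₀)) * Real.exp (γ * r))
    (Eventually.of_forall fun t =>
      (aestronglyMeasurable_exp_smul_apply A t hg).indicator measurableSet_Iic) ?_
    (IntegrableOn.integrable_indicator ((integrableOn_exp_mul_Iic hγ _).const_mul _)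
      measurableSet_Iic) ?_
  · filter_upwards [Ioo_mem_nhds (sub_one_lt t₀) (lt_add_one t₀)] with t ht
    refine Eventually.of_forall fun r => ?_
    dsimp only [F]
    by_cases hr : r ≤ t
    · rw [indicator_of_mem (mem_Iic.2 hr), indicator_of_mem (mem_Iic.2 (hr.trans ht.2.le))]
      calc ‖NormedSpace.exp ((t - r) • A) (g r)‖ ≤ Real.exp (-(γ * (t - r))) * ‖g r‖ :=
            norm_exp_smul_apply_le hA (sub_nonneg.2 hr) _
        _ ≤ Real.exp (γ * (1 - t₀) + γ * r) * C := by gcongr; exacts [by nlinarith [ht.1], hb r]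
        _ = C * Real.exp (γ * (1 - t₀)) * Real.exp (γ * r) := by rw [Real.exp_add]; ring
    · rw [indicator_of_notMem (fun h => hr (mem_Iic.1 h)), norm_zero]
      exact indicator_nonneg (fun _ _ => by positivity) _
  · filter_upwards [Measure.ae_ne volume t₀] with r hr
    have hcont : Continuous fun t => NormedSpace.exp ((t - r) • A) (g r) :=
      ((continuous_exp_smul A).comp (continuous_id.sub continuous_const)).clm_apply
        continuous_const
    exact hcont.continuousOn.continuousAt_indicator (s := Ici r)
      (by rw [frontier_Ici]; exact hr.symm)

section Nonlinear

variable [MeasurableSpace E] [BorelSpace E] [SecondCountableTopology E] {Φ : ℝ → E → E}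
  {M L : ℝ}

theorem exists_bounded_continuous_eq_lyapunovPerron (hγ : 0 < γ)
    (hA : ∀ x, ⟪A x, x⟫ ≤ -γ * ‖x‖ ^ 2) (hΦm : Measurable (Function.uncurry Φ))
    (hΦb : ∀ r x, ‖Φ r x‖ ≤ M) (hΦL : ∀ r x y, ‖Φ r x - Φ r y‖ ≤ L * ‖x - y‖) (hL : 0 ≤ L)
    (hLγ : L < γ) :
    ∃ u : ℝ → E, Continuous u ∧ (∀ t, ‖u t‖ ≤ M / γ) ∧
      ∀ t, u t = lyapunovPerron A (fun r => Φ r (u r)) t := by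
  have hmeas (u : ℝ →ᵇ E) : AEStronglyMeasurable (fun r => Φ r (u r)) := by
    simpa using aestronglyMeasurable_comp_of_continuousOn hΦm MeasurableSet.univ
      u.continuous.continuousOn
  let T : (ℝ →ᵇ E) → (ℝ →ᵇ E) := fun u =>
    .ofNormedAddCommGroup (lyapunovPerron A fun r => Φ r (u r))
      (continuous_lyapunovPerron hγ hA (hmeas u) fun r => hΦb r _) (M / γ)
      fun _ => norm_lyapunovPerron_le_div hγ hA fun r _ => hΦb r _
  have hT : ContractingWith (L / γ).toNNReal T := by
    refine ⟨Real.toNNReal_lt_one.2 ((div_lt_one hγ).2 hLγ),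
      LipschitzWith.of_dist_le_mul fun u v => ?_⟩
    rw [Real.coe_toNNReal _ (by positivity), BoundedContinuousFunction.dist_le (by positivity)]
    intro t
    have hint (w : ℝ →ᵇ E) := integrableOn_exp_smul_apply (t := t) hγ hA (hmeas w).restrict
      fun r _ => hΦb r (w r)
    rw [dist_eq_norm]
    change ‖lyapunovPerron A _ t - lyapunovPerron A _ t‖ ≤ _
    rw [lyapunovPerron_sub (hint u) (hint v)]
    refine (norm_lyapunovPerron_le_div (C := L * dist u v) hγ hA fun r _ =>
      (hΦL r _ _).trans ?_).trans_eq (by ring)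
    gcongr
    rw [← dist_eq_norm]
    exact BoundedContinuousFunction.dist_coe_le_dist r
  obtain ⟨u, hu⟩ : ∃ u, Function.IsFixedPt T u := ⟨_, hT.fixedPoint_isFixedPt⟩
  have hu_eq (t : ℝ) : u t = lyapunovPerron A (fun r => Φ r (u r)) t :=
    (DFunLike.congr_fun hu t).symm
  exact ⟨u, u.continuous, fun t => hu_eq t ▸ norm_lyapunovPerron_le_div hγ hA fun r _ => hΦb r _,
    hu_eq⟩

theorem eqOn_Iic_zero_of_eq_lyapunovPerron (hγ : 0 < γ)
    (hA : ∀ x, ⟪A x, x⟫ ≤ -γ * ‖x‖ ^ 2) (hΦm : Measurable (Function.uncurry Φ))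
    (hΦb : ∀ r x, ‖Φ r x‖ ≤ M) (hΦL : ∀ r x y, ‖Φ r x - Φ r y‖ ≤ L * ‖x - y‖) (hL : 0 ≤ L)
    {μ : ℝ} (hLγμ : L < γ - μ) {u v : ℝ → E}
    (hu : ContinuousOn u (Iic 0)) (hu_bdd : ∃ K, ∀ t ≤ 0, Real.exp (μ * t) * ‖u t‖ ≤ K)
    (hu_eq : ∀ t ≤ 0, u t = lyapunovPerron A (fun r => Φ r (u r)) t)
    (hv : ContinuousOn v (Iic 0)) (hv_bdd : ∃ K, ∀ t ≤ 0, Real.exp (μ * t) * ‖v t‖ ≤ K)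
    (hv_eq : ∀ t ≤ 0, v t = lyapunovPerron A (fun r => Φ r (v r)) t) :
    EqOn u v (Iic 0) := by
  obtain ⟨Ku, hKu⟩ := hu_bdd
  obtain ⟨Kv, hKv⟩ := hv_bdd
  have hγμ : 0 < γ - μ := hL.trans_lt hLγμ
  suffices EqOn (fun t => Real.exp (μ * t) * ‖u t - v t‖) 0 (Iic 0) from fun t ht =>
    sub_eq_zero.1 <| norm_eq_zero.1 <|
      (mul_eq_zero.1 (this ht)).resolve_left (Real.exp_pos _).ne'
  refine eqOn_zero_of_le_mul_of_upperBound (q := L / (γ - μ)) (fun t _ => by positivity)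
    ⟨Ku + Kv, ?_⟩ ((div_lt_one hγμ).2 hLγμ) fun D hD t ht => ?_
  · rintro _ ⟨t, ht, rfl⟩
    calc Real.exp (μ * t) * ‖u t - v t‖ ≤ Real.exp (μ * t) * (‖u t‖ + ‖v t‖) := by
          gcongr; exact norm_sub_le _ _
      _ ≤ Ku + Kv := by rw [mul_add]; exact add_le_add (hKu t ht) (hKv t ht)
  · have hint {w : ℝ → E} (hw : ContinuousOn w (Iic 0)) := integrableOn_exp_smul_apply hγ hA
      (aestronglyMeasurable_comp_of_continuousOn hΦm measurableSet_Iic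
        (hw.mono (Iic_subset_Iic.2 ht))) fun r _ => hΦb r (w r)
    have hdiff : u t - v t = lyapunovPerron A (fun r => Φ r (u r) - Φ r (v r)) t := by
      rw [hu_eq t ht, hv_eq t ht, lyapunovPerron_sub (hint hu) (hint hv)]
    have hb (r : ℝ) (hr : r ≤ t) :
        ‖Φ r (u r) - Φ r (v r)‖ ≤ L * D * Real.exp (-(μ * r)) := by
      refine (hΦL r _ _).trans ?_
      rw [mul_assoc]
      gcongr
      rw [Real.exp_neg, ← div_eq_mul_inv, le_div_iff₀ (Real.exp_pos _), mul_comm]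
      exact hD r (hr.trans ht)
    calc Real.exp (μ * t) * ‖u t - v t‖
        ≤ Real.exp (μ * t) * (L * D * Real.exp (-(μ * t)) / (γ - μ)) := by
          rw [hdiff]; gcongr; exact norm_lyapunovPerron_le hA (by linarith) hb
      _ = L / (γ - μ) * D := by rw [Real.exp_neg]; field_simp

end Nonlinear

/-- Under (H1), (H3), (H5) and `γ₁ - μ > L` (`μ > 0`), for every `v₀ ∈ ℝᵐ`
the integral equation `û_t = ∫_{-∞}^t e^{A(t-r)} U(û_r + a(r), v₀) dr`, `t ≤ 0`, has a unique
solution `û ∈ C⁻_μ(ℝⁿ)`, and its value at `0` (the graph map `F̌⁰(v₀)` of the invariant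
manifold of the `ε = 0` system) satisfies `‖û₀‖ ≤ M_U/γ₁`. -/
theorem limit_graph_map_exists (n m : ℕ)
    (γ₁ L MU μ : ℝ)
    (A : EuclideanSpace ℝ (Fin n) →L[ℝ] EuclideanSpace ℝ (Fin n))
    (U : EuclideanSpace ℝ (Fin n) × EuclideanSpace ℝ (Fin m) → EuclideanSpace ℝ (Fin n))
    -- (H1)
    (hγ₁ : 0 < γ₁)
    (hA : ∀ x : EuclideanSpace ℝ (Fin n), ⟪A x, x⟫ ≤ -γ₁ * ‖x‖ ^ 2)
    -- (H3)
    (hL : 0 < L)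
    (hUL : ∀ x₁ y₁ x₂ y₂, ‖U (x₁, y₁) - U (x₂, y₂)‖ ≤ L * (‖x₁ - x₂‖ + ‖y₁ - y₂‖))
    -- (H5)
    (hMU : ∀ z, ‖U z‖ ≤ MU)
    -- scales: μ > 0, γ₁ - μ > L
    (hμ : 0 < μ) (hμL : L < γ₁ - μ)
    -- input path
    (a : ℝ → EuclideanSpace ℝ (Fin n)) (ha : Measurable a) :
    ∀ v₀ : EuclideanSpace ℝ (Fin m),
      ∃ uh : ℝ → EuclideanSpace ℝ (Fin n),
        IsLimitStarSolution n m μ A U a v₀ uh ∧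
        ‖uh 0‖ ≤ MU / γ₁ ∧
        ∀ uh' : ℝ → EuclideanSpace ℝ (Fin n),
          IsLimitStarSolution n m μ A U a v₀ uh' → ∀ t : ℝ, t ≤ 0 → uh' t = uh t := by
  intro v₀
  set Φ : ℝ → EuclideanSpace ℝ (Fin n) → EuclideanSpace ℝ (Fin n) := fun r x => U (x + a r, v₀)
  have hΦm : Measurable (Function.uncurry Φ) := (continuous_of_norm_sub_le hUL).measurable.comp
    ((measurable_snd.add (ha.comp measurable_fst)).prodMk measurable_const)
  have hΦL (r : ℝ) (x y) : ‖Φ r x - Φ r y‖ ≤ L * ‖x - y‖ := by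
    simpa using hUL (x + a r) v₀ (y + a r) v₀
  obtain ⟨u, hu_cont, hu_bdd, hu_eq⟩ := exists_bounded_continuous_eq_lyapunovPerron hγ₁ hA hΦm
    (fun _ _ => hMU _) hΦL hL.le (by linarith)
  have hu : IsLimitStarSolution n m μ A U a v₀ u :=
    ⟨hu_cont.continuousOn, ⟨MU / γ₁, fun t ht => (mul_le_of_le_one_left (norm_nonneg _)
      (Real.exp_le_one_iff.2 (by nlinarith))).trans (hu_bdd t)⟩, fun t _ => hu_eq t⟩
  exact ⟨u, hu, hu_bdd 0, fun u' ⟨hc', hK', heq'⟩ t ht =>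
    eqOn_Iic_zero_of_eq_lyapunovPerron hγ₁ hA hΦm (fun _ _ => hMU _) hΦL hL.le hμL
      hc' hK' heq' hu.1 hu.2.1 hu.2.2 ht⟩
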